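/- arXiv:1002.1058 — 2 statements merged into one kernel-verified Lean document; each statement's English description precedes it below -/
import Mathlib

section
/- Let n ≥ 1, let Pₙ be the path graph on vertices Δ = {α₁,…,αₙ}, and let J₀ ⊆ Δ. Suppose Λ*(Pₙ,J₀) is a distributive lattice and |Δ − J₀| > 1. Then Λ*(Pₙ,J₀) is locally rank-symmetric (for every interval [U,W] and every i, the number of elements V ∈ [U,W] with |V| − |U| = i equals the number with |W| − |V| = i), and Λ*(Pₙ,J₀) is order-isomorphic to a product of finite chains. -/
open SimpleGraph Finset

/-- `ReachIn G U a b` : `b` is reachable from `a` within the subgraph of `G`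
induced on the vertex set `U`. -/
def ReachIn {n : ℕ} (G : SimpleGraph (Fin n)) (U : Finset (Fin n)) (a b : Fin n) : Prop :=
  Relation.ReflTransGen (fun x y => G.Adj x y ∧ x ∈ U ∧ y ∈ U) a b

/-- `U` is admissible (with respect to `J₀`) if no connected component of the
subgraph of `G` induced on `U` is entirely contained in `J₀`: every component
contains a vertex outside `J₀`. -/
def Admissible {n : ℕ} (G : SimpleGraph (Fin n)) (J₀ U : Finset (Fin n)) : Prop :=
  ∀ a ∈ U, ∃ b, ReachIn G U a b ∧ b ∉ J₀

/-- A subset `A` is connected if the induced subgraph on `A` is connected. -/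
def ConnIn {n : ℕ} (G : SimpleGraph (Fin n)) (A : Finset (Fin n)) : Prop :=
  ∀ a ∈ A, ∀ b ∈ A, ReachIn G A a b

theorem ReachIn.mono {n : ℕ} {G : SimpleGraph (Fin n)} {U V : Finset (Fin n)} (h : U ⊆ V)
    {a b : Fin n} (hr : ReachIn G U a b) : ReachIn G V a b := by
  unfold ReachIn at *
  induction hr with
  | refl => exact Relation.ReflTransGen.refl
  | tail _ hxy ih => exact ih.tail ⟨hxy.1, h hxy.2.1, h hxy.2.2⟩

theorem admissible_empty {n : ℕ} (G : SimpleGraph (Fin n)) (J₀ : Finset (Fin n)) :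
    Admissible G J₀ ∅ := fun a ha => absurd ha (Finset.notMem_empty a)

theorem admissible_union {n : ℕ} {G : SimpleGraph (Fin n)} {J₀ U V : Finset (Fin n)}
    (hU : Admissible G J₀ U) (hV : Admissible G J₀ V) : Admissible G J₀ (U ∪ V) := by
  intro a ha
  rcases Finset.mem_union.mp ha with h | h
  · obtain ⟨b, hb, hbJ⟩ := hU a h
    exact ⟨b, hb.mono Finset.subset_union_left, hbJ⟩
  · obtain ⟨b, hb, hbJ⟩ := hV a h
    exact ⟨b, hb.mono Finset.subset_union_right, hbJ⟩

/-- `Λ*(G, J₀)` : the poset of admissible subsets, ordered by inclusion. -/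
def CrossSection {n : ℕ} (G : SimpleGraph (Fin n)) (J₀ : Finset (Fin n)) : Type :=
  {U : Finset (Fin n) // Admissible G J₀ U}

namespace CrossSection

variable {n : ℕ} {G : SimpleGraph (Fin n)} {J₀ : Finset (Fin n)}

instance : PartialOrder (CrossSection G J₀) :=
  inferInstanceAs (PartialOrder {U : Finset (Fin n) // Admissible G J₀ U})

instance : DecidableEq (CrossSection G J₀) :=
  inferInstanceAs (DecidableEq {U : Finset (Fin n) // Admissible G J₀ U})

noncomputable instance : Fintype (CrossSection G J₀) :=
  Fintype.ofInjective (Subtype.val : CrossSection G J₀ → Finset (Fin n)) Subtype.val_injective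

open Classical in
/-- The underlying set of the meet of two admissible sets: the largest admissible
subset contained in the intersection. -/
noncomputable def meetFinset (G : SimpleGraph (Fin n)) (J₀ : Finset (Fin n))
    (U V : Finset (Fin n)) : Finset (Fin n) :=
  ((U ∩ V).powerset.filter (fun W => Admissible G J₀ W)).sup id

theorem admissible_sup {s : Finset (Finset (Fin n))}
    (h : ∀ W ∈ s, Admissible G J₀ W) : Admissible G J₀ (s.sup id) :=
  Finset.sup_induction (by simpa using admissible_empty G J₀)
    (fun a ha b hb => by simpa using admissible_union ha hb) h

theorem admissible_meetFinset (G : SimpleGraph (Fin n)) (J₀ U V : Finset (Fin n)) :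
    Admissible G J₀ (meetFinset G J₀ U V) := by
  classical
  exact admissible_sup (fun W hW => (Finset.mem_filter.mp hW).2)

theorem meetFinset_subset_left (G : SimpleGraph (Fin n)) (J₀ U V : Finset (Fin n)) :
    meetFinset G J₀ U V ≤ U := by
  classical
  unfold meetFinset
  refine Finset.sup_le (fun W hW => ?_)
  have := Finset.mem_powerset.mp (Finset.mem_filter.mp hW).1
  exact fun x hx => (Finset.mem_inter.mp (this hx)).1

theorem meetFinset_subset_right (G : SimpleGraph (Fin n)) (J₀ U V : Finset (Fin n)) :
    meetFinset G J₀ U V ≤ V := by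
  classical
  unfold meetFinset
  refine Finset.sup_le (fun W hW => ?_)
  have := Finset.mem_powerset.mp (Finset.mem_filter.mp hW).1
  exact fun x hx => (Finset.mem_inter.mp (this hx)).2

theorem subset_meetFinset {G : SimpleGraph (Fin n)} {J₀ U V W : Finset (Fin n)}
    (hW : Admissible G J₀ W) (h1 : W ⊆ U) (h2 : W ⊆ V) : W ≤ meetFinset G J₀ U V := by
  classical
  unfold meetFinset
  exact Finset.le_sup (f := id)
    (Finset.mem_filter.mpr ⟨Finset.mem_powerset.mpr (Finset.subset_inter h1 h2), hW⟩)

noncomputable instance : Lattice (CrossSection G J₀) :=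
  { (inferInstance : PartialOrder (CrossSection G J₀)) with
    sup := fun U V => ⟨U.1 ∪ V.1, admissible_union U.2 V.2⟩
    le_sup_left := fun U V => show U.1 ⊆ U.1 ∪ V.1 from Finset.subset_union_left
    le_sup_right := fun U V => show V.1 ⊆ U.1 ∪ V.1 from Finset.subset_union_right
    sup_le := fun U V W h1 h2 => show U.1 ∪ V.1 ⊆ W.1 from Finset.union_subset h1 h2
    inf := fun U V => ⟨meetFinset G J₀ U.1 V.1, admissible_meetFinset G J₀ U.1 V.1⟩
    inf_le_left := fun U V => meetFinset_subset_left G J₀ U.1 V.1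
    inf_le_right := fun U V => meetFinset_subset_right G J₀ U.1 V.1
    le_inf := fun W U V h1 h2 => subset_meetFinset W.2 h1 h2 }

instance : OrderBot (CrossSection G J₀) where
  bot := ⟨∅, admissible_empty G J₀⟩
  bot_le := fun U => show (∅ : Finset (Fin n)) ⊆ U.1 from Finset.empty_subset _

@[simp] theorem sup_val (U V : CrossSection G J₀) : (U ⊔ V).1 = U.1 ∪ V.1 := rfl

@[simp] theorem inf_val (U V : CrossSection G J₀) : (U ⊓ V).1 = meetFinset G J₀ U.1 V.1 := rfl

end CrossSection

/-!
Distributivity forces the vertices outside `J₀` to form an interval `[L, R]` of the path, with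
`L < R` as there are at least two of them. An admissible `U` is then a set in which every vertex
outside `[L, R]` is joined to `[L, R]` inside `U`. Projecting the path onto `[L, R]` cuts it into
the fibres `[0, L]`, `[R, n)` and the singletons in between; on each fibre an admissible set is an
initial segment when the fibre is read outward from `[L, R]`, so it is determined by its size.
These sizes identify `Λ*` with a product of chains in which rank is the coordinate sum, and there
`x ↦ u + w - x` is a rank-reversing involution of every interval `[u, w]`.
-/

theorem ReachIn.eq_or_mem {n : ℕ} {G : SimpleGraph (Fin n)} {U : Finset (Fin n)} {a b : Fin n}
    (h : ReachIn G U a b) : b = a ∨ b ∈ U := by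
  induction h with
  | refl => exact Or.inl rfl
  | tail _ hxy _ => exact Or.inr hxy.2.2

theorem Admissible.eq_empty_of_subset {n : ℕ} {G : SimpleGraph (Fin n)} {J₀ U : Finset (Fin n)}
    (hU : Admissible G J₀ U) (hUJ : U ⊆ J₀) : U = ∅ := by
  refine Finset.eq_empty_of_forall_notMem fun a ha => ?_
  obtain ⟨b, hab, hb⟩ := hU a ha
  rcases hab.eq_or_mem with rfl | hbU
  exacts [hb (hUJ ha), hb (hUJ hbU)]

section PathGraph

variable {n : ℕ} {J₀ U : Finset (Fin n)}

theorem ReachIn.uIcc_subset {a b : Fin n} (h : ReachIn (pathGraph n) U a b) (ha : a ∈ U) :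
    Set.uIcc a b ⊆ U := by
  induction h with
  | refl => simpa using ha
  | @tail x y _ hxy ih =>
    refine Set.uIcc_subset_uIcc_union_uIcc.trans (Set.union_subset ih ?_)
    have hxyU : ({x, y} : Set (Fin n)) ⊆ U := Set.insert_subset hxy.2.1 (by simpa using hxy.2.2)
    rcases hasse_adj.mp hxy.1 with hcov | hcov
    · rwa [Set.uIcc_of_le hcov.le, hcov.Icc_eq]
    · rwa [Set.uIcc_of_ge hcov.le, hcov.Icc_eq, Set.pair_comm]

theorem reachIn_of_uIcc_subset {a b : Fin n} (h : Set.uIcc a b ⊆ U) :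
    ReachIn (pathGraph n) U a b := by
  have hmem : ∀ i ∈ Set.Ico a b ∪ Set.Ico b a, i ∈ U ∧ Order.succ i ∈ U := by
    rintro i (⟨hai, hib⟩ | ⟨hbi, hia⟩)
    · exact ⟨h (Set.Icc_subset_uIcc ⟨hai, hib.le⟩),
        h (Set.Icc_subset_uIcc ⟨hai.trans (Order.le_succ i), Order.succ_le_of_lt hib⟩)⟩
    · exact ⟨h (Set.Icc_subset_uIcc' ⟨hbi, hia.le⟩),
        h (Set.Icc_subset_uIcc' ⟨hbi.trans (Order.le_succ i), Order.succ_le_of_lt hia⟩)⟩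
  refine reflTransGen_of_succ _ (fun i hi => ?_) (fun i hi => ?_)
  · have hcov := Order.covBy_succ_of_not_isMax hi.2.not_isMax
    exact ⟨hasse_adj.mpr (Or.inl hcov), hmem i (Or.inl hi)⟩
  · have hcov := Order.covBy_succ_of_not_isMax hi.2.not_isMax
    exact ⟨hasse_adj.mpr (Or.inr hcov), (hmem i (Or.inr hi)).symm⟩

theorem admissible_pathGraph_iff :
    Admissible (pathGraph n) J₀ U ↔ ∀ a ∈ U, ∃ b ∉ J₀, Set.uIcc a b ⊆ U :=
  forall₂_congr fun _ ha => exists_congr fun _ =>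
    ⟨fun h => ⟨h.2, h.1.uIcc_subset ha⟩, fun h => ⟨reachIn_of_uIcc_subset h.2, h.1⟩⟩

theorem admissible_of_ordConnected (hU : (U : Set (Fin n)).OrdConnected) {f : Fin n}
    (hfU : f ∈ U) (hf : f ∉ J₀) : Admissible (pathGraph n) J₀ U :=
  admissible_pathGraph_iff.mpr fun _ ha => ⟨f, hf, hU.uIcc_subset ha hfU⟩

end PathGraph

section Distributive

variable {n : ℕ} {J₀ : Finset (Fin n)}

/-- With `f₁ ≤ v ≤ f₂` and `v ∈ J₀`, the intervals `x = [f₁, v]`, `y = [v, f₂]`, `z = [f₁, v)`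
violate distributivity: `x ≤ y ⊔ z` and `z ≤ x`, but `x ⊓ y = ⊥` since `x ∩ y = {v} ⊆ J₀`. -/
theorem ordConnected_free_of_distrib
    (hdist : ∀ x y z : CrossSection (pathGraph n) J₀, x ⊓ (y ⊔ z) = (x ⊓ y) ⊔ (x ⊓ z)) :
    Set.OrdConnected {v : Fin n | v ∉ J₀} := by
  refine ⟨fun f₁ (hf₁ : f₁ ∉ J₀) f₂ (hf₂ : f₂ ∉ J₀) v ⟨hf₁v, hvf₂⟩ (hv : v ∈ J₀) => ?_⟩
  have hf₁v : f₁ < v := lt_of_le_of_ne hf₁v (by rintro rfl; exact hf₁ hv)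
  let x : CrossSection (pathGraph n) J₀ :=
    ⟨Icc f₁ v, admissible_of_ordConnected (by simpa using Set.ordConnected_Icc)
      (left_mem_Icc.mpr hf₁v.le) hf₁⟩
  let y : CrossSection (pathGraph n) J₀ :=
    ⟨Icc v f₂, admissible_of_ordConnected (by simpa using Set.ordConnected_Icc)
      (right_mem_Icc.mpr hvf₂) hf₂⟩
  let z : CrossSection (pathGraph n) J₀ :=
    ⟨Ico f₁ v, admissible_of_ordConnected (by simpa using Set.ordConnected_Ico)
      (left_mem_Ico.mpr hf₁v) hf₁⟩
  have hx : x ≤ y ⊔ z := show Icc f₁ v ⊆ Icc v f₂ ∪ Ico f₁ v from fun a ha => by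
    simp only [mem_union, mem_Icc, mem_Ico] at ha ⊢
    by_cases hav : a = v
    · exact Or.inl ⟨hav.ge, hav ▸ hvf₂⟩
    · exact Or.inr ⟨ha.1, lt_of_le_of_ne ha.2 hav⟩
  have hz : z ≤ x := Ico_subset_Icc_self
  have hxy : x ⊓ y = ⊥ := by
    refine Subtype.ext ((x ⊓ y).2.eq_empty_of_subset fun a ha => ?_)
    have hax : a ∈ Icc f₁ v := (inf_le_left : x ⊓ y ≤ x) ha
    have hay : a ∈ Icc v f₂ := (inf_le_right : x ⊓ y ≤ y) ha
    rwa [le_antisymm (mem_Icc.mp hax).2 (mem_Icc.mp hay).1]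
  have hxz : x = z := by
    simpa only [inf_eq_left.mpr hx, hxy, inf_eq_right.mpr hz, bot_sup_eq] using hdist x y z
  have hvx : v ∈ x.1 := right_mem_Icc.mpr hf₁v.le
  rw [hxz] at hvx
  exact (mem_Ico.mp hvx).2.false

theorem exists_lt_forall_notMem_iff_of_distrib
    (hdist : ∀ x y z : CrossSection (pathGraph n) J₀, x ⊓ (y ⊔ z) = (x ⊓ y) ⊔ (x ⊓ z))
    (hbig : 1 < (univ \ J₀).card) :
    ∃ L R : Fin n, L < R ∧ ∀ v, v ∉ J₀ ↔ L ≤ v ∧ v ≤ R := by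
  have hne : (univ \ J₀).Nonempty := card_pos.mp (by omega)
  have hfree : ∀ v, v ∈ univ \ J₀ ↔ v ∉ J₀ := by simp
  refine ⟨_, _, min'_lt_max'_of_card _ hbig, fun v => ⟨fun hv => ?_, fun hv => ?_⟩⟩
  · exact ⟨min'_le _ _ ((hfree v).mpr hv), le_max' _ _ ((hfree v).mpr hv)⟩
  · exact (ordConnected_free_of_distrib hdist).out ((hfree _).mp (min'_mem _ hne))
      ((hfree _).mp (max'_mem _ hne)) hv

end Distributive

section DepthClosed

variable {β ι : Type*} [DecidableEq ι] (blk : β → ι) (depth : β → ℕ)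

def DepthClosed (U : Finset β) : Prop :=
  ∀ v ∈ U, ∀ w, blk w = blk v → depth w ≤ depth v → w ∈ U

def fiberCard (U : Finset β) (i : ι) : ℕ := #{v ∈ U | blk v = i}

variable {blk depth}

theorem card_eq_sum_fiberCard [Fintype ι] (U : Finset β) : #U = ∑ i, fiberCard blk U i :=
  card_eq_sum_card_fiberwise fun _ _ => mem_univ _

theorem fiberCard_mono {U V : Finset β} (h : U ⊆ V) (i : ι) :
    fiberCard blk U i ≤ fiberCard blk V i :=
  card_le_card (filter_subset_filter _ h)

/-- Within a fiber, two depth-closed sets are nested, so comparing their cardinalities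
compares the sets. -/
theorem DepthClosed.subset_of_fiberCard_le {U V : Finset β} (hU : DepthClosed blk depth U)
    (hV : DepthClosed blk depth V) (h : ∀ i, fiberCard blk U i ≤ fiberCard blk V i) : U ⊆ V := by
  intro v hv
  by_contra hvV
  have hVU : {w ∈ V | blk w = blk v} ⊆ {w ∈ U | blk w = blk v} := by
    intro w hw
    rw [mem_filter] at hw ⊢
    refine ⟨?_, hw.2⟩
    rcases le_or_gt (depth v) (depth w) with hvw | hwv
    · exact absurd (hV w hw.1 v hw.2.symm hvw) hvV
    · exact hU v hv w hw.2 hwv.le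
  have hv' : v ∈ {w ∈ U | blk w = blk v} := mem_filter.mpr ⟨hv, rfl⟩
  rw [← eq_of_subset_of_card_le hVU (h (blk v))] at hv'
  exact hvV (mem_filter.mp hv').1

theorem exists_subset_card_eq_forall_depth_le_mem [DecidableEq β] {B : Finset β}
    (hinj : Set.InjOn depth B) {m : ℕ} (hm : m ≤ #B) :
    ∃ S ⊆ B, #S = m ∧ ∀ v ∈ S, ∀ w ∈ B, depth w ≤ depth v → w ∈ S := by
  induction B using induction_on_max_value depth generalizing m with
  | empty => exact ⟨∅, subset_refl _, (Nat.le_zero.mp hm).symm, by simp⟩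
  | insert a B haB hmax ih =>
    rw [card_insert_of_notMem haB] at hm
    rcases hm.lt_or_eq with hm | rfl
    · obtain ⟨S, hSB, hS, hclosed⟩ :=
        ih (hinj.mono (by simp)) (Nat.le_of_lt_succ hm)
      refine ⟨S, hSB.trans (subset_insert a B), hS, fun v hv w hw hwv => ?_⟩
      rcases mem_insert.mp hw with rfl | hwB
      · have hvB := hSB hv
        have := hinj (mem_insert_of_mem hvB) (mem_insert_self _ B) (le_antisymm (hmax v hvB) hwv)
        exact absurd (this ▸ hvB) haB
      · exact hclosed v hv w hwB hwv
    · exact ⟨insert a B, subset_refl _, card_insert_of_notMem haB, fun _ _ w hw _ => hw⟩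

theorem exists_depthClosed_fiberCard_eq [Fintype β]
    (hinj : ∀ v w, blk v = blk w → depth v = depth w → v = w)
    (x : ι → ℕ) (hx : ∀ i, x i ≤ fiberCard blk univ i) :
    ∃ U, DepthClosed blk depth U ∧ ∀ i, fiberCard blk U i = x i := by
  classical
  choose S hSB hS hclosed using fun i => exists_subset_card_eq_forall_depth_le_mem
    (B := {v | blk v = i}) (fun v hv w hw => hinj v w (by simp_all)) (hx i)
  have hblk : ∀ {i v}, v ∈ S i → blk v = i := fun hv => (mem_filter.mp (hSB _ hv)).2
  refine ⟨({v | v ∈ S (blk v)} : Finset β), fun v hv w hvw hwv => ?_, fun i => ?_⟩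
  · simp only [mem_filter, mem_univ, true_and] at hv ⊢
    exact hvw ▸ hclosed _ v hv w (by simpa using hvw) hwv
  · rw [fiberCard, ← hS i]
    congr 1
    ext v
    simp only [mem_filter, mem_univ, true_and]
    exact ⟨fun h => h.2 ▸ h.1, fun h => ⟨(hblk h).symm ▸ h, hblk h⟩⟩

noncomputable def fiberCardOrderIso [Fintype β] {P : Finset β → Prop}
    (hP : ∀ U, P U ↔ DepthClosed blk depth U)
    (hinj : ∀ v w, blk v = blk w → depth v = depth w → v = w) :
    {U // P U} ≃o ∀ i, Fin (fiberCard blk univ i + 1) :=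
  OrderIso.ofSurjective
    (OrderEmbedding.ofMapLEIff
      (fun U i => ⟨fiberCard blk U.1 i, Nat.lt_succ_of_le (fiberCard_mono (subset_univ _) i)⟩)
      fun U V => ⟨fun h => ((hP U.1).mp U.2).subset_of_fiberCard_le ((hP V.1).mp V.2) h,
        fun h i => fiberCard_mono h i⟩)
    fun x => by
      obtain ⟨U, hU, hUx⟩ := exists_depthClosed_fiberCard_eq hinj (fun i => x i)
        fun i => Nat.le_of_lt_succ (x i).isLt
      exact ⟨⟨U, (hP U).mpr hU⟩, funext fun i => Fin.ext (hUx i)⟩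

end DepthClosed

section ChainProduct

variable {ι : Type*} {c : ι → ℕ}

/-- The point reflection `x ↦ u + w - x` of the box `[u, w]`; the cut-off at `w` only matters
outside the box and keeps the value in `Fin (c i)`. -/
def reflectIcc (u w x : ∀ i, Fin (c i)) : ∀ i, Fin (c i) :=
  fun i => ⟨min (u i + w i - x i) (w i), (min_le_right _ _).trans_lt (w i).isLt⟩

variable {u w x : ∀ i, Fin (c i)}

theorem val_reflectIcc (hux : u ≤ x) (i : ι) :
    (reflectIcc u w x i : ℕ) = u i + w i - x i := by
  have : (u i : ℕ) ≤ x i := hux i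
  simp only [reflectIcc]
  omega

theorem reflectIcc_mem_Icc (hux : u ≤ x) (hxw : x ≤ w) :
    u ≤ reflectIcc u w x ∧ reflectIcc u w x ≤ w := by
  refine ⟨fun i => ?_, fun i => ?_⟩ <;>
  · have h₁ : (u i : ℕ) ≤ x i := hux i
    have h₂ : (x i : ℕ) ≤ w i := hxw i
    rw [Fin.le_def, val_reflectIcc hux]
    omega

theorem reflectIcc_reflectIcc (hux : u ≤ x) (hxw : x ≤ w) :
    reflectIcc u w (reflectIcc u w x) = x := by
  funext i
  have h₁ : (u i : ℕ) ≤ x i := hux i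
  have h₂ : (x i : ℕ) ≤ w i := hxw i
  rw [Fin.ext_iff, val_reflectIcc (reflectIcc_mem_Icc hux hxw).1, val_reflectIcc hux]
  omega

theorem sum_reflectIcc_add_sum [Fintype ι] (hux : u ≤ x) (hxw : x ≤ w) :
    ∑ i, (reflectIcc u w x i : ℕ) + ∑ i, (x i : ℕ) = ∑ i, (u i : ℕ) + ∑ i, (w i : ℕ) := by
  rw [← sum_add_distrib, ← sum_add_distrib]
  refine sum_congr rfl fun i _ => ?_
  have h₁ : (u i : ℕ) ≤ x i := hux i
  have h₂ : (x i : ℕ) ≤ w i := hxw i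
  rw [val_reflectIcc hux]
  omega

open Classical in
theorem card_filter_sum_eq_add_eq_card_filter_add_eq_sum [Fintype ι] (u w : ∀ i, Fin (c i))
    (k : ℕ) :
    #{x | u ≤ x ∧ x ≤ w ∧ ∑ i, (x i : ℕ) = ∑ i, (u i : ℕ) + k} =
      #{x | u ≤ x ∧ x ≤ w ∧ ∑ i, (x i : ℕ) + k = ∑ i, (w i : ℕ)} := by
  refine card_nbij' (reflectIcc u w) (reflectIcc u w) ?_ ?_ ?_ ?_ <;>
  · intro x hx
    simp only [coe_filter, mem_univ, true_and, Set.mem_ofPred_eq] at hx ⊢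
    obtain ⟨hux, hxw, hx⟩ := hx
    first
    | exact reflectIcc_reflectIcc hux hxw
    | have := sum_reflectIcc_add_sum hux hxw
      exact ⟨(reflectIcc_mem_Icc hux hxw).1, (reflectIcc_mem_Icc hux hxw).2, by omega⟩

end ChainProduct

open Classical in
theorem OrderIso.card_filter_eq_add_eq_card_filter_add_eq {α ι : Type*} [PartialOrder α]
    [Fintype α] [Fintype ι] {c : ι → ℕ} (e : α ≃o ∀ i, Fin (c i)) {ρ : α → ℕ}
    (hρ : ∀ a, ρ a = ∑ i, (e a i : ℕ)) (u w : α) (k : ℕ) :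
    #{v | u ≤ v ∧ v ≤ w ∧ ρ v = ρ u + k} = #{v | u ≤ v ∧ v ≤ w ∧ ρ v + k = ρ w} := by
  calc #{v | u ≤ v ∧ v ≤ w ∧ ρ v = ρ u + k}
      = #{x | e u ≤ x ∧ x ≤ e w ∧ ∑ i, (x i : ℕ) = ∑ i, (e u i : ℕ) + k} :=
        card_equiv e.toEquiv fun v => by simp [hρ]
    _ = #{x | e u ≤ x ∧ x ≤ e w ∧ ∑ i, (x i : ℕ) + k = ∑ i, (e w i : ℕ)} :=
        card_filter_sum_eq_add_eq_card_filter_add_eq_sum _ _ k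
    _ = #{v | u ≤ v ∧ v ≤ w ∧ ρ v + k = ρ w} :=
        (card_equiv e.toEquiv fun v => by simp [hρ]).symm

section PathProjection

variable {n : ℕ} {L R v w : Fin n}

def clampIcc (L R v : Fin n) : Fin n :=
  ⟨max L (min v R), max_lt L.isLt ((min_le_left _ _).trans_lt v.isLt)⟩

theorem clampIcc_mem_Icc (hLR : L ≤ R) : L ≤ clampIcc L R v ∧ clampIcc L R v ≤ R := by
  simp only [clampIcc, Fin.le_def]
  omega

def distIcc (L R v : Fin n) : ℕ := (L - v : ℕ) + (v - R : ℕ)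

theorem mem_uIcc_of_clampIcc_eq_of_distIcc_le {b : Fin n} (hLR : L < R) (hLb : L ≤ b)
    (hbR : b ≤ R) (hclamp : clampIcc L R w = clampIcc L R v)
    (hdist : distIcc L R w ≤ distIcc L R v) :
    w ∈ Set.uIcc v b := by
  simp only [clampIcc, distIcc, Fin.ext_iff, Fin.le_def, Fin.lt_def, Set.mem_uIcc] at *
  omega

theorem clampIcc_eq_and_distIcc_le_of_mem_uIcc (hLR : L ≤ R)
    (hw : w ∈ Set.uIcc v (clampIcc L R v)) :
    clampIcc L R w = clampIcc L R v ∧ distIcc L R w ≤ distIcc L R v := by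
  simp only [clampIcc, distIcc, Fin.ext_iff, Fin.le_def, Set.mem_uIcc] at *
  omega

theorem eq_of_clampIcc_eq_of_distIcc_eq (hLR : L < R) (hclamp : clampIcc L R v = clampIcc L R w)
    (hdist : distIcc L R v = distIcc L R w) : v = w := by
  simp only [clampIcc, distIcc, Fin.ext_iff, Fin.lt_def] at *
  omega

theorem admissible_pathGraph_iff_depthClosed {J₀ U : Finset (Fin n)} (hLR : L < R)
    (hfree : ∀ v, v ∉ J₀ ↔ L ≤ v ∧ v ≤ R) :
    Admissible (pathGraph n) J₀ U ↔ DepthClosed (clampIcc L R) (distIcc L R) U := by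
  rw [admissible_pathGraph_iff]
  constructor
  · intro hU v hv w hclamp hdist
    obtain ⟨b, hb, hvb⟩ := hU v hv
    exact hvb (mem_uIcc_of_clampIcc_eq_of_distIcc_le hLR ((hfree b).mp hb).1 ((hfree b).mp hb).2
      hclamp hdist)
  · intro hU v hv
    refine ⟨clampIcc L R v, (hfree _).mpr (clampIcc_mem_Icc hLR.le), fun w hw => ?_⟩
    obtain ⟨hclamp, hdist⟩ := clampIcc_eq_and_distIcc_le_of_mem_uIcc hLR.le hw
    exact hU v hv w hclamp hdist

end PathProjection

open scoped Classical in
theorem stmt_11_general (n : ℕ) (J₀ : Finset (Fin n))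
    (hdist : ∀ x y z : CrossSection (pathGraph n) J₀,
      x ⊓ (y ⊔ z) = (x ⊓ y) ⊔ (x ⊓ z))
    (hbig : 1 < (Finset.univ \ J₀).card) :
    (∀ U W : CrossSection (pathGraph n) J₀, U ≤ W → ∀ i : ℕ,
      (Finset.univ.filter (fun V : CrossSection (pathGraph n) J₀ =>
          U ≤ V ∧ V ≤ W ∧ V.1.card = U.1.card + i)).card =
      (Finset.univ.filter (fun V : CrossSection (pathGraph n) J₀ =>
          U ≤ V ∧ V ≤ W ∧ V.1.card + i = W.1.card)).card) ∧
    (∃ (k : ℕ) (c : Fin k → ℕ),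
      Nonempty (CrossSection (pathGraph n) J₀ ≃o ((i : Fin k) → Fin (c i)))) := by
  obtain ⟨L, R, hLR, hfree⟩ := exists_lt_forall_notMem_iff_of_distrib hdist hbig
  let e : CrossSection (pathGraph n) J₀ ≃o _ :=
    fiberCardOrderIso (fun _ => admissible_pathGraph_iff_depthClosed hLR hfree)
      fun _ _ => eq_of_clampIcc_eq_of_distIcc_eq hLR
  refine ⟨fun U W _ i => e.card_filter_eq_add_eq_card_filter_add_eq (ρ := fun V => V.1.card)
    (fun V => card_eq_sum_fiberCard V.1) U W i, n, _, ⟨e⟩⟩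

open scoped Classical in
theorem stmt_11 (n : ℕ) (hn : 1 ≤ n) (J₀ : Finset (Fin n))
    (hdist : ∀ x y z : CrossSection (pathGraph n) J₀,
      x ⊓ (y ⊔ z) = (x ⊓ y) ⊔ (x ⊓ z))
    (hbig : 1 < (Finset.univ \ J₀).card) :
    (∀ U W : CrossSection (pathGraph n) J₀, U ≤ W → ∀ i : ℕ,
      (Finset.univ.filter (fun V : CrossSection (pathGraph n) J₀ =>
          U ≤ V ∧ V ≤ W ∧ V.1.card = U.1.card + i)).card =
      (Finset.univ.filter (fun V : CrossSection (pathGraph n) J₀ =>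
          U ≤ V ∧ V ≤ W ∧ V.1.card + i = W.1.card)).card) ∧
    (∃ (k : ℕ) (c : Fin k → ℕ),
      Nonempty (CrossSection (pathGraph n) J₀ ≃o ((i : Fin k) → Fin (c i)))) :=
  stmt_11_general n J₀ hdist hbig
end

section
/- Let n ≥ 1, let Pₙ be the path graph on vertices Δ = {α₁,…,αₙ}, and let J₀ ⊆ Δ. Suppose every connected component of J₀ (in Pₙ) is either a singleton or a connected subset of Δ containing an end node of Pₙ. If X ∈ Λ*(Pₙ,J₀) is an admissible subset with Δ − J₀ ⊆ X, then X is both a right modular and a left modular element of the lattice Λ*(Pₙ,J₀). -/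
open SimpleGraph Finset

/-!
Meeting with `X` is plain intersection: if `a ∈ U ∩ X` lies in `J₀`, either `a` is isolated
in `J₀`, so the first step of a path in `U` leaving `J₀` already lands outside `J₀` and hence
in `X`; or `a`'s component of `J₀` runs to an end node, so paths from `a` in `U` and in `X`
leaving `J₀` both head the other way along the path, and the shorter one lies in `U ∩ X`.
Once every meet with an admissible superset of `X` is an intersection, both modular laws
are those of the distributive lattice of finite sets.
-/

section Reach

variable {n : ℕ} {G : SimpleGraph (Fin n)} {W : Finset (Fin n)} {a b : Fin n}

theorem ReachIn.symm (h : ReachIn G W a b) : ReachIn G W b a := by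
  induction h with
  | refl => exact .refl
  | tail _ step ih => exact .head ⟨step.1.symm, step.2.2, step.2.1⟩ ih

theorem reachIn_pathGraph_of_Icc_subset (hab : a ≤ b) (h : Icc a b ⊆ W) :
    ReachIn (pathGraph n) W a b := by
  obtain ⟨m, hm⟩ := b
  induction m with
  | zero => exact (Fin.ext (by simp [Fin.le_def] at hab; omega) : a = ⟨0, hm⟩) ▸ .refl
  | succ m ih =>
    by_cases ham : a.val = m + 1
    · exact (Fin.ext ham : a = ⟨m + 1, hm⟩) ▸ .refl
    have hIcc : Icc a ⟨m, by omega⟩ ⊆ Icc a ⟨m + 1, hm⟩ := Icc_subset_Icc_right (by simp)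
    refine (ih (by omega) (by simp [Fin.le_def] at hab ⊢; omega) (hIcc.trans h)).tail
      ⟨pathGraph_adj.mpr (Or.inl rfl), h (hIcc ?_), h ?_⟩ <;>
      simp [Fin.le_def] at hab ⊢ <;> omega

theorem reachIn_pathGraph_iff (ha : a ∈ W) :
    ReachIn (pathGraph n) W a b ↔ uIcc a b ⊆ W := by
  constructor
  · intro h
    induction h with
    | refl => simpa using ha
    | @tail b c _ step ih =>
      intro d hd
      by_cases hdc : d = c
      · exact hdc ▸ step.2.2
      · have hadj := pathGraph_adj.mp step.1
        refine ih ?_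
        simp only [Finset.mem_uIcc', Fin.le_def, Fin.ext_iff] at hd hdc ⊢
        omega
  · intro h
    rcases le_total a b with hab | hba
    · exact reachIn_pathGraph_of_Icc_subset hab (uIcc_of_le hab ▸ h)
    · exact (reachIn_pathGraph_of_Icc_subset hba (uIcc_of_ge hba ▸ h)).symm

end Reach

theorem mem_uIcc_or_mem_uIcc_of_same_side {α : Type*} [LinearOrder α] [LocallyFiniteOrder α]
    {a b c : α} (h : (a ≤ b ∧ a ≤ c) ∨ (b ≤ a ∧ c ≤ a)) : b ∈ uIcc a c ∨ c ∈ uIcc a b := by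
  simp only [Finset.mem_uIcc']
  rcases le_total b c with hbc | hcb <;> tauto

section Intersection

variable {n : ℕ} {G : SimpleGraph (Fin n)} {J₀ U X : Finset (Fin n)} {a : Fin n}

theorem exists_reachIn_inter_of_neighbors_notMem (hU : Admissible G J₀ U)
    (hXc : univ \ J₀ ⊆ X) (ha : a ∈ U ∩ X) (hnbr : ∀ c, G.Adj a c → c ∉ J₀) :
    ∃ b, ReachIn G (U ∩ X) a b ∧ b ∉ J₀ := by
  obtain ⟨b, hb, hbJ⟩ := hU a (mem_inter.mp ha).1
  rcases Relation.ReflTransGen.cases_head hb with rfl | ⟨c, hac, -⟩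
  · exact ⟨a, .refl, hbJ⟩
  · have hcJ := hnbr c hac.1
    have hcX : c ∈ X := hXc (mem_sdiff.mpr ⟨mem_univ c, hcJ⟩)
    exact ⟨c, .single ⟨hac.1, ha, mem_inter.mpr ⟨hac.2.2, hcX⟩⟩, hcJ⟩

theorem exists_reachIn_inter_of_side_subset (hU : Admissible (pathGraph n) J₀ U)
    (hX : Admissible (pathGraph n) J₀ X) (ha : a ∈ U ∩ X)
    (hside : (∀ c ≤ a, c ∈ J₀) ∨ (∀ c, a ≤ c → c ∈ J₀)) :
    ∃ b, ReachIn (pathGraph n) (U ∩ X) a b ∧ b ∉ J₀ := by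
  obtain ⟨haU, haX⟩ := mem_inter.mp ha
  obtain ⟨b, hb, hbJ⟩ := hU a haU
  obtain ⟨c, hc, hcJ⟩ := hX a haX
  rw [reachIn_pathGraph_iff haU] at hb
  rw [reachIn_pathGraph_iff haX] at hc
  have hsame : (a ≤ b ∧ a ≤ c) ∨ (b ≤ a ∧ c ≤ a) := by
    rcases hside with hle | hge
    · exact .inl ⟨le_of_not_ge (hbJ ∘ hle b), le_of_not_ge (hcJ ∘ hle c)⟩
    · exact .inr ⟨le_of_not_ge (hbJ ∘ hge b), le_of_not_ge (hcJ ∘ hge c)⟩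
  rcases mem_uIcc_or_mem_uIcc_of_same_side hsame with hbc | hcb
  · refine ⟨b, (reachIn_pathGraph_iff ha).mpr ?_, hbJ⟩
    exact subset_inter hb ((uIcc_subset_uIcc_left hbc).trans hc)
  · refine ⟨c, (reachIn_pathGraph_iff ha).mpr ?_, hcJ⟩
    exact subset_inter ((uIcc_subset_uIcc_left hcb).trans hb) hc

theorem Admissible.inter_pathGraph
    (hJ₀ : ∀ a ∈ J₀, (∀ c, (pathGraph n).Adj a c → c ∉ J₀) ∨
      (∀ c ≤ a, c ∈ J₀) ∨ (∀ c, a ≤ c → c ∈ J₀))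
    (hU : Admissible (pathGraph n) J₀ U) (hX : Admissible (pathGraph n) J₀ X)
    (hXc : univ \ J₀ ⊆ X) :
    Admissible (pathGraph n) J₀ (U ∩ X) := by
  intro a ha
  by_cases haJ : a ∈ J₀
  · rcases hJ₀ a haJ with hnbr | hside | hside
    · exact exists_reachIn_inter_of_neighbors_notMem hU hXc ha hnbr
    · exact exists_reachIn_inter_of_side_subset hU hX ha (.inl hside)
    · exact exists_reachIn_inter_of_side_subset hU hX ha (.inr hside)
  · exact ⟨a, .refl, haJ⟩

end Intersection

theorem CrossSection.inf_val_of_admissible_inter {n : ℕ} {G : SimpleGraph (Fin n)}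
    {J₀ : Finset (Fin n)} {U V : CrossSection G J₀} (h : Admissible G J₀ (U.1 ∩ V.1)) :
    (U ⊓ V).1 = U.1 ∩ V.1 :=
  le_antisymm (subset_inter (meetFinset_subset_left G J₀ U.1 V.1)
      (meetFinset_subset_right G J₀ U.1 V.1))
    (subset_meetFinset h inter_subset_left inter_subset_right)

theorem stmt_15 (n : ℕ) (hn : 1 ≤ n) (J₀ : Finset (Fin n))
    (hcomp : ∀ a ∈ J₀, (∀ b, ReachIn (pathGraph n) J₀ a b → b = a) ∨
      ReachIn (pathGraph n) J₀ a ⟨0, by omega⟩ ∨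
      ReachIn (pathGraph n) J₀ a ⟨n - 1, by omega⟩)
    (X : CrossSection (pathGraph n) J₀) (hX : Finset.univ \ J₀ ⊆ X.1) :
    (∀ U V : CrossSection (pathGraph n) J₀, V ≤ X → V ⊔ (U ⊓ X) = (V ⊔ U) ⊓ X) ∧
    (∀ U V : CrossSection (pathGraph n) J₀, U ≤ V → U ⊔ (X ⊓ V) = (U ⊔ X) ⊓ V) := by
  have hJ₀ : ∀ a ∈ J₀, (∀ c, (pathGraph n).Adj a c → c ∉ J₀) ∨
      (∀ c ≤ a, c ∈ J₀) ∨ (∀ c, a ≤ c → c ∈ J₀) := by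
    intro a haJ
    refine (hcomp a haJ).imp (fun hiso c hac hcJ => ?_) (Or.imp (fun h0 c hca => ?_)
      (fun hlast c hac => ?_))
    · exact (pathGraph n).irrefl (hiso c (.single ⟨hac, haJ, hcJ⟩) ▸ hac)
    · exact (reachIn_pathGraph_iff haJ).mp h0
        (mem_uIcc'.mpr (.inr ⟨Fin.le_def.mpr (Nat.zero_le _), hca⟩))
    · exact (reachIn_pathGraph_iff haJ).mp hlast
        (mem_uIcc'.mpr (.inl ⟨hac, Fin.le_def.mpr (Nat.le_sub_one_of_lt c.isLt)⟩))
  have hmeet : ∀ U Y : CrossSection (pathGraph n) J₀, X ≤ Y → (U ⊓ Y).1 = U.1 ∩ Y.1 :=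
    fun U Y hXY => CrossSection.inf_val_of_admissible_inter
      (U.2.inter_pathGraph hJ₀ Y.2 (hX.trans hXY))
  refine ⟨fun U V hVX => Subtype.ext ?_, fun U V hUV => Subtype.ext ?_⟩
  · simp only [CrossSection.sup_val, hmeet _ X le_rfl]
    exact (sup_inf_assoc_of_le U.1 hVX).symm
  · rw [inf_comm X, inf_comm _ V]
    simp only [CrossSection.sup_val, hmeet V _ le_rfl, hmeet V _ le_sup_right]
    rw [inter_comm V.1, inter_comm V.1]
    exact (sup_inf_assoc_of_le X.1 hUV).symm
end
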